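/- Let T be an n×n hermitian partial isometry. Then A is T-EP if and only if T A is EP and A = A T² = T² A. -/

import Mathlib

/-!
A square matrix `B` has a Moore–Penrose inverse `X` commuting with it exactly when
`range B = range Bᴴ`. The Penrose equations give `range B = range (B X)` and
`range Bᴴ = range (X B)`, so commutation forces equality. Conversely, if `P` is the orthogonal
projection onto `range B = range Bᴴ`, then `P (B + 1 - P) = B = (B + 1 - P) P`, the matrix
`B + 1 - P` is invertible because `range Bᴴ ∩ ker B = 0`, and `(B + 1 - P)⁻¹ P` is the inverse.

Since `T³ = T`, the matrix `T²` is the identity on `range T`. Once `A = T² A` and `A = A T²`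
(equivalently `Aᴴ = T² Aᴴ`), multiplying by `T` exchanges `range A` with `range (T A)` and
`range (T Aᴴ T)` with `range (Aᴴ T) = range (T A)ᴴ`, so `range A = range (T Aᴴ T)` holds if and
only if `T A` is EP.
-/

open Matrix

/-- The four Penrose conditions: `X` is the Moore-Penrose inverse of `A`. -/
def IsMP {m n : ℕ} (A : Matrix (Fin m) (Fin n) ℂ) (X : Matrix (Fin n) (Fin m) ℂ) : Prop :=
  A * X * A = A ∧ X * A * X = X ∧ (A * X)ᴴ = A * X ∧ (X * A)ᴴ = X * A

/-- `A` is T-EP: range(A) = range(T Aᴴ T) and A = A Tᴴ T. -/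
def IsTEP {m n : ℕ} (T A : Matrix (Fin m) (Fin n) ℂ) : Prop :=
  LinearMap.range (Matrix.mulVecLin A) = LinearMap.range (Matrix.mulVecLin (T * Aᴴ * T)) ∧
    A = A * Tᴴ * T

namespace Matrix

section Range

variable {R : Type*} [CommSemiring R] {k l m : Type*} [Fintype k] [Fintype m]

theorem range_mulVecLin_mul (M : Matrix l m R) (N : Matrix m k R) :
    LinearMap.range (M * N).mulVecLin = (LinearMap.range N.mulVecLin).map M.mulVecLin := by
  rw [mulVecLin_mul, LinearMap.range_comp]

theorem range_mulVecLin_mul_le (M : Matrix l m R) (N : Matrix m k R) :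
    LinearMap.range (M * N).mulVecLin ≤ LinearMap.range M.mulVecLin := by
  rw [mulVecLin_mul]
  exact LinearMap.range_comp_le_range _ _

theorem range_mulVecLin_eq_mul_of_mul_mul_eq [Fintype l] {M : Matrix l m R} {N : Matrix m l R}
    (h : M * N * M = M) : LinearMap.range M.mulVecLin = LinearMap.range (M * N).mulVecLin := by
  refine le_antisymm ?_ (range_mulVecLin_mul_le M N)
  simpa only [h] using range_mulVecLin_mul_le (M * N) M

theorem mul_eq_self_of_range_mulVecLin_le [Fintype l] [DecidableEq m] {E : Matrix l l R} {M : Matrix l m R}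
    {N : Matrix l k R} (hE : E * N = N)
    (h : LinearMap.range M.mulVecLin ≤ LinearMap.range N.mulVecLin) : E * M = M := by
  refine ext_of_mulVec_single fun i => ?_
  obtain ⟨w, hw⟩ := h ⟨Pi.single i 1, rfl⟩
  simp only [mulVecLin_apply] at hw
  rw [← mulVec_mulVec, ← hw, mulVec_mulVec, hE]

end Range

section OrthogonalProjection

variable {𝕜 : Type*} [RCLike 𝕜] {m : Type*} [Fintype m] [DecidableEq m]

theorem mem_range_mulVecLin_iff_toLp_mem (M : Matrix m m 𝕜) (x : m → 𝕜) :
    x ∈ LinearMap.range M.mulVecLin ↔ WithLp.toLp 2 x ∈ (toEuclideanCLM (𝕜 := 𝕜) M).range := by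
  constructor
  · rintro ⟨y, rfl⟩
    exact ⟨WithLp.toLp 2 y, rfl⟩
  · rintro ⟨y, hy⟩
    exact ⟨WithLp.ofLp y, congrArg WithLp.ofLp hy⟩

theorem exists_orthogonalProjection_range_eq (B : Matrix m m 𝕜) :
    ∃ P : Matrix m m 𝕜, Pᴴ = P ∧ P * P = P ∧
      LinearMap.range P.mulVecLin = LinearMap.range B.mulVecLin := by
  set K := (toEuclideanCLM (𝕜 := 𝕜) B).range
  obtain ⟨P, hP⟩ : ∃ P, toEuclideanCLM (𝕜 := 𝕜) P = K.starProjection :=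
    ⟨_, StarAlgEquiv.apply_symm_apply _ _⟩
  refine ⟨P, EquivLike.injective (toEuclideanCLM (𝕜 := 𝕜) (n := m)) ?_,
    EquivLike.injective (toEuclideanCLM (𝕜 := 𝕜) (n := m)) ?_, ?_⟩
  · rw [← star_eq_conjTranspose, map_star, hP, (isSelfAdjoint_starProjection K).star_eq]
  · rw [map_mul, hP, K.isIdempotentElem_starProjection.eq]
  · ext x
    rw [mem_range_mulVecLin_iff_toLp_mem, mem_range_mulVecLin_iff_toLp_mem, hP,
      K.range_starProjection]

open scoped ComplexOrder in
theorem isUnit_add_one_sub_of_range_mulVecLin_le {B P : Matrix m m 𝕜} (hPP : P * P = P)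
    (hPB : P * B = B) (hP : LinearMap.range P.mulVecLin ≤ LinearMap.range Bᴴ.mulVecLin) :
    IsUnit (B + 1 - P) := by
  have hPC : P * (B + 1 - P) = B := by
    rw [mul_sub, mul_add, hPB, hPP, mul_one, add_sub_cancel_right]
  refine mulVec_injective_iff_isUnit.mp <|
    (injective_iff_map_eq_zero (B + 1 - P).mulVecLin).mpr fun v hv => ?_
  rw [mulVecLin_apply] at hv
  have hBv : B *ᵥ v = 0 := by rw [← hPC, ← mulVec_mulVec, hv, mulVec_zero]
  have hPv : P *ᵥ v = v := by
    rwa [sub_mulVec, add_mulVec, hBv, one_mulVec, zero_add, sub_eq_zero, eq_comm] at hv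
  obtain ⟨w, rfl⟩ := hP ⟨v, hPv⟩
  rw [mulVecLin_apply] at hBv ⊢
  rw [← dotProduct_star_self_eq_zero, star_mulVec, conjTranspose_conjTranspose,
    ← dotProduct_mulVec, hBv, dotProduct_zero]

end OrthogonalProjection

end Matrix

section MoorePenrose

variable {n : ℕ}

theorem IsMP.range_mulVecLin_eq {m : ℕ} {B : Matrix (Fin m) (Fin n) ℂ}
    {X : Matrix (Fin n) (Fin m) ℂ} (h : IsMP B X) :
    LinearMap.range B.mulVecLin = LinearMap.range (B * X).mulVecLin :=
  range_mulVecLin_eq_mul_of_mul_mul_eq h.1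

theorem IsMP.range_mulVecLin_conjTranspose_eq {m : ℕ} {B : Matrix (Fin m) (Fin n) ℂ}
    {X : Matrix (Fin n) (Fin m) ℂ} (h : IsMP B X) :
    LinearMap.range Bᴴ.mulVecLin = LinearMap.range (X * B).mulVecLin := by
  have hB : Bᴴ * Xᴴ * Bᴴ = Bᴴ := by
    rw [← conjTranspose_mul, ← conjTranspose_mul, ← Matrix.mul_assoc, h.1]
  rw [range_mulVecLin_eq_mul_of_mul_mul_eq hB, ← conjTranspose_mul, h.2.2.2]

theorem exists_isMP_commute_of_isUnit_add_one_sub {B P : Matrix (Fin n) (Fin n) ℂ}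
    (hPH : Pᴴ = P) (hPP : P * P = P) (hPB : P * B = B) (hBP : B * P = B)
    (hC : IsUnit (B + 1 - P)) : ∃ X, IsMP B X ∧ B * X = X * B := by
  set C := B + 1 - P with hC_def
  have hdet : IsUnit C.det := (isUnit_iff_isUnit_det C).mp hC
  have hCP : C * P = B := by rw [hC_def, sub_mul, add_mul, hBP, one_mul, hPP, add_sub_cancel_right]
  have hPC : P * C = B := by rw [hC_def, mul_sub, mul_add, hPB, mul_one, hPP, add_sub_cancel_right]
  have hBX : B * (C⁻¹ * P) = P := by
    rw [← hPC, mul_assoc, ← mul_assoc C, mul_nonsing_inv C hdet, one_mul, hPP]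
  have hXB : C⁻¹ * P * B = P := by
    rw [mul_assoc, hPB, ← hCP, ← mul_assoc, nonsing_inv_mul C hdet, one_mul]
  refine ⟨C⁻¹ * P, ⟨?_, ?_, ?_, ?_⟩, ?_⟩
  · rw [hBX, hPB]
  · rw [mul_assoc, hBX, mul_assoc, hPP]
  · rw [hBX, hPH]
  · rw [hXB, hPH]
  · rw [hBX, hXB]

theorem exists_isMP_commute_iff_range_mulVecLin_eq (B : Matrix (Fin n) (Fin n) ℂ) :
    (∃ X, IsMP B X ∧ B * X = X * B) ↔
      LinearMap.range B.mulVecLin = LinearMap.range Bᴴ.mulVecLin := by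
  constructor
  · rintro ⟨X, hX, hcomm⟩
    rw [hX.range_mulVecLin_eq, hX.range_mulVecLin_conjTranspose_eq, hcomm]
  · intro hB
    obtain ⟨P, hPH, hPP, hP⟩ := exists_orthogonalProjection_range_eq B
    have hPB : P * B = B := mul_eq_self_of_range_mulVecLin_le hPP hP.ge
    have hPBH : P * Bᴴ = Bᴴ := mul_eq_self_of_range_mulVecLin_le hPP (hP.trans hB).ge
    have hBP : B * P = B := by
      simpa only [conjTranspose_mul, conjTranspose_conjTranspose, hPH] using
        congrArg conjTranspose hPBH
    exact exists_isMP_commute_of_isUnit_add_one_sub hPH hPP hPB hBP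
      (isUnit_add_one_sub_of_range_mulVecLin_le hPP hPB (hP.trans hB).le)

end MoorePenrose

theorem stmt18 {n : ℕ} (A T : Matrix (Fin n) (Fin n) ℂ)
    (hT : T = T * Tᴴ * T) (hH : T = Tᴴ) :
    IsTEP T A ↔
      ((∃ Bd : Matrix (Fin n) (Fin n) ℂ,
          IsMP (T * A) Bd ∧ T * A * Bd = Bd * (T * A)) ∧
        A = A * (T * T) ∧ A = T * T * A) := by
  have hTTT : T * T * T = T := by simpa only [← hH] using hT.symm
  have hTA : (T * A)ᴴ = Aᴴ * T := by rw [conjTranspose_mul, ← hH]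
  rw [exists_isMP_commute_iff_range_mulVecLin_eq, hTA]
  constructor
  · rintro ⟨hrange, hA⟩
    have hATT : A = A * (T * T) := by rwa [← hH, mul_assoc] at hA
    have hTTA : T * T * A = A := mul_eq_self_of_range_mulVecLin_le hTTT <|
      hrange.trans_le <| (range_mulVecLin_mul_le _ _).trans (range_mulVecLin_mul_le _ _)
    have hTTAH : T * T * Aᴴ = Aᴴ := by
      conv_rhs => rw [hATT, conjTranspose_mul, conjTranspose_mul, ← hH]
    refine ⟨?_, hATT, hTTA.symm⟩
    rw [range_mulVecLin_mul, hrange, ← range_mulVecLin_mul, ← mul_assoc, ← mul_assoc, hTTAH]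
  · rintro ⟨hrange, hATT, hTTA⟩
    refine ⟨?_, by rw [← hH, mul_assoc]; exact hATT⟩
    conv_lhs => rw [hTTA]
    rw [mul_assoc, range_mulVecLin_mul, hrange, ← range_mulVecLin_mul, mul_assoc]
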